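/- For every element g of the braid group B₃ = ⟨σ₁, σ₂ | σ₁σ₂σ₁ = σ₂σ₁σ₂⟩, there exist a natural number k and an element p of the submonoid of B₃ generated by {σ₁, σ₂} (i.e., p is a finite product of copies of σ₁ and σ₂ with no inverses) such that g · ((σ₁σ₂)³)ᵏ = p. In other words, every element of B₃ agrees with a positive braid word modulo a nonnegative power of the central element Δ² = (σ₁σ₂)³. -/

import Mathlib

/-!
`Δ² = (σ₁σ₂)³` is central, and `σ₁⁻¹Δ² = σ₂σ₁σ₂σ₁σ₂`, `σ₂⁻¹Δ² = σ₁σ₂σ₂σ₁σ₂` are positive words.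
Centrality makes the set of `g` with `gΔ²ᵏ` positive for some `k` closed under products, and it
contains the generators and their inverses, so it is all of `B₃`.
-/

open Matrix MatrixGroups
open scoped LinearAlgebra.Projectivization

/-- The braid relation `σ₁σ₂σ₁ = σ₂σ₁σ₂`, with `σ₁` and `σ₂` the generators indexed by
`false` and `true` respectively. -/
def braidRels : Set (FreeGroup Bool) :=
  {FreeGroup.of false * FreeGroup.of true * FreeGroup.of false *
    (FreeGroup.of true * FreeGroup.of false * FreeGroup.of true)⁻¹}

/-- The braid group `B₃ = ⟨σ₁, σ₂ ∣ σ₁σ₂σ₁ = σ₂σ₁σ₂⟩` on three strands. -/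
abbrev B₃ := PresentedGroup braidRels

/-- The first standard generator of `B₃`. -/
def σ₁ : B₃ := PresentedGroup.of false

/-- The second standard generator of `B₃`. -/
def σ₂ : B₃ := PresentedGroup.of true

theorem Subgroup.exists_mul_pow_mem_submonoidClosure {G : Type*} [Group G] {S : Set G} {z : G}
    (hS : Subgroup.closure S = ⊤) (hz : z ∈ Subgroup.center G)
    (hinv : ∀ s ∈ S, ∃ k : ℕ, s⁻¹ * z ^ k ∈ Submonoid.closure S) (g : G) :
    ∃ k : ℕ, g * z ^ k ∈ Submonoid.closure S := by
  have hg : g ∈ Subgroup.closure S := hS ▸ Subgroup.mem_top g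
  induction hg using Subgroup.closure_induction'' with
  | mem s hs => exact ⟨0, by simpa using Submonoid.subset_closure hs⟩
  | inv_mem s hs => exact hinv s hs
  | one => exact ⟨0, by simp⟩
  | mul x y _ _ hx hy =>
    obtain ⟨k, hk⟩ := hx
    obtain ⟨m, hm⟩ := hy
    have hyz : y * z ^ k = z ^ k * y :=
      (Commute.pow_right (Subgroup.mem_center_iff.mp hz y) k).eq
    have : x * y * z ^ (k + m) = x * z ^ k * (y * z ^ m) := by
      rw [pow_add, mul_assoc x, ← mul_assoc y, hyz]; group
    exact ⟨k + m, this ▸ mul_mem hk hm⟩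

namespace B₃

theorem braid_rel : σ₁ * σ₂ * σ₁ = σ₂ * σ₁ * σ₂ :=
  PresentedGroup.mk_eq_mk_of_mul_inv_mem (Set.mem_singleton _)

theorem closure_σ₁_σ₂ : Subgroup.closure ({σ₁, σ₂} : Set B₃) = ⊤ := by
  have : ({σ₁, σ₂} : Set B₃) = Set.range PresentedGroup.of := by
    ext; simp [σ₁, σ₂]
  rw [this, PresentedGroup.closure_range_of]

def Δ : B₃ := σ₁ * σ₂ * σ₁

theorem σ₁_mul_Δ : σ₁ * Δ = Δ * σ₂ := by
  conv_lhs => rw [Δ, braid_rel]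
  rw [Δ]; group

theorem σ₂_mul_Δ : σ₂ * Δ = Δ * σ₁ := by
  conv_rhs => rw [Δ, braid_rel]
  rw [Δ]; group

theorem Δ_sq : Δ ^ 2 = (σ₁ * σ₂) ^ 3 := by
  rw [sq]
  conv_lhs => arg 2; rw [Δ, braid_rel]
  rw [Δ, pow_succ, pow_succ, pow_one]; group

theorem Δ_sq_mem_center : Δ ^ 2 ∈ Subgroup.center B₃ := by
  have h₁ : Δ ^ 2 * σ₁ = σ₁ * Δ ^ 2 := by
    rw [sq, mul_assoc, ← σ₂_mul_Δ, ← mul_assoc, ← σ₁_mul_Δ, mul_assoc]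
  have h₂ : Δ ^ 2 * σ₂ = σ₂ * Δ ^ 2 := by
    rw [sq, mul_assoc, ← σ₁_mul_Δ, ← mul_assoc, ← σ₂_mul_Δ, mul_assoc]
  rw [Subgroup.center_eq_iInf closure_σ₁_σ₂]
  simp [Subgroup.mem_centralizer_singleton_iff, h₁, h₂]

theorem σ₁_inv_mul_Δ_sq : σ₁⁻¹ * Δ ^ 2 = σ₂ * σ₁ * σ₂ * σ₁ * σ₂ := by
  rw [Δ_sq, pow_succ, pow_succ, pow_one]; group

theorem σ₂_inv_mul_Δ_sq : σ₂⁻¹ * Δ ^ 2 = σ₁ * σ₂ * σ₂ * σ₁ * σ₂ := by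
  rw [Δ, braid_rel, sq]; group

end B₃

/-- Every element of `B₃` agrees with a positive braid word after multiplying by a
nonnegative power of the central element `Δ² = (σ₁σ₂)³`. -/
theorem mul_central_pow_eq_positive (g : B₃) :
    ∃ (k : ℕ) (p : B₃), p ∈ Submonoid.closure ({σ₁, σ₂} : Set B₃) ∧
      g * ((σ₁ * σ₂) ^ 3) ^ k = p := by
  have hσ₁ : σ₁ ∈ Submonoid.closure ({σ₁, σ₂} : Set B₃) := Submonoid.subset_closure (by simp)
  have hσ₂ : σ₂ ∈ Submonoid.closure ({σ₁, σ₂} : Set B₃) := Submonoid.subset_closure (by simp)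
  have hinv : ∀ s ∈ ({σ₁, σ₂} : Set B₃),
      ∃ k : ℕ, s⁻¹ * (B₃.Δ ^ 2) ^ k ∈ Submonoid.closure ({σ₁, σ₂} : Set B₃) := by
    rintro s (rfl | rfl) <;> refine ⟨1, ?_⟩
    · rw [pow_one, B₃.σ₁_inv_mul_Δ_sq]
      exact mul_mem (mul_mem (mul_mem (mul_mem hσ₂ hσ₁) hσ₂) hσ₁) hσ₂
    · rw [pow_one, B₃.σ₂_inv_mul_Δ_sq]
      exact mul_mem (mul_mem (mul_mem (mul_mem hσ₁ hσ₂) hσ₂) hσ₁) hσ₂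
  obtain ⟨k, hk⟩ := Subgroup.exists_mul_pow_mem_submonoidClosure
    B₃.closure_σ₁_σ₂ B₃.Δ_sq_mem_center hinv g
  exact ⟨k, _, B₃.Δ_sq ▸ hk, rfl⟩
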